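/- Let (B, L) be a Banach SNL space with Banach SNL dual (B*, L̃) and suppose L is surjective onto B*. Then B is reflexive and (B**, L^{TT}) is a Banach SNL dual of (B*, L̃), where L^{TT} is the double adjoint of L. -/

import Mathlib

open NormedSpace

noncomputable instance instNormedAddCommGroupStrongDualStrongDualReal {E : Type*}
    [NormedAddCommGroup E] [NormedSpace ℝ E] :
    NormedAddCommGroup (StrongDual ℝ (StrongDual ℝ E)) := inferInstance

noncomputable instance instNormedSpaceStrongDualStrongDualReal {E : Type*}
    [NormedAddCommGroup E] [NormedSpace ℝ E] :
    NormedSpace ℝ (StrongDual ℝ (StrongDual ℝ E)) := inferInstance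

noncomputable def qL {B : Type*} [NormedAddCommGroup B] [NormedSpace ℝ B]
    (L : B →L[ℝ] StrongDual ℝ B) (b : B) : ℝ := (1 / 2) * L b b

/-- The Banach-space adjoint `L^T : B** → B*` of `L : B → B*`, `L^T b** = b** ∘ L`. -/
noncomputable def Ltrans {B : Type*} [NormedAddCommGroup B] [NormedSpace ℝ B]
    (L : B →L[ℝ] StrongDual ℝ B) : StrongDual ℝ (StrongDual ℝ B) →L[ℝ] StrongDual ℝ B :=
  (ContinuousLinearMap.compL ℝ B (StrongDual ℝ B) ℝ).flip L

/-- The double adjoint `L^{TT} : B** → B***` of `L`, `L^{TT} b** = b** ∘ L^T`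
(viewing `L^{TT}` as the adjoint of `L^T : B** → B*`). -/
noncomputable def Ltranstrans {B : Type*} [NormedAddCommGroup B] [NormedSpace ℝ B]
    (L : B →L[ℝ] StrongDual ℝ B) :
    StrongDual ℝ (StrongDual ℝ B) →L[ℝ] StrongDual ℝ (StrongDual ℝ (StrongDual ℝ B)) :=
  (ContinuousLinearMap.compL ℝ (StrongDual ℝ (StrongDual ℝ B)) (StrongDual ℝ B) ℝ).flip (Ltrans L)


/-! If `L^T F = L b`, then `F` and `b` agree as functionals on `L(B) = B*`, so `B` is reflexive.
Once every element of `B**` has the form `ι b` (`ι : B → B**` the canonical embedding),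
symmetry of `L` gives `L^T (ι b) = L b`, and each claim about `L^{TT}` reduces to the corresponding property of `L` and `L̃` on `B`. -/

open ContinuousLinearMap

lemma norm_compL_flip_apply_le {E F : Type*} [NormedAddCommGroup E] [NormedSpace ℝ E]
    [NormedAddCommGroup F] [NormedSpace ℝ F] (T : E →L[ℝ] F) :
    ‖(compL ℝ E F ℝ).flip T‖ ≤ ‖T‖ :=
  opNorm_le_bound _ (norm_nonneg T) fun g ↦ by
    simpa only [flip_apply, compL_apply, mul_comm] using opNorm_comp_le g T

section

variable {B : Type*} [NormedAddCommGroup B] [NormedSpace ℝ B] (L : B →L[ℝ] StrongDual ℝ B)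

@[simp]
lemma ltrans_apply (F : StrongDual ℝ (StrongDual ℝ B)) (x : B) : Ltrans L F x = F (L x) := rfl

@[simp]
lemma ltranstrans_apply (P Q : StrongDual ℝ (StrongDual ℝ B)) :
    Ltranstrans L Q P = Q (Ltrans L P) := rfl

lemma norm_ltranstrans_le : ‖Ltranstrans L‖ ≤ ‖L‖ :=
  (norm_compL_flip_apply_le _).trans (norm_compL_flip_apply_le L)

variable {L}

lemma ltrans_inclusionInDoubleDual (hsym : ∀ b c : B, L c b = L b c) (b : B) :
    Ltrans L (inclusionInDoubleDual ℝ B b) = L b := by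
  ext x
  exact hsym b x

lemma surjective_inclusionInDoubleDual_of_surjective (hsym : ∀ b c : B, L c b = L b c)
    (hsurj : Function.Surjective L) : Function.Surjective (inclusionInDoubleDual ℝ B) := by
  intro F
  obtain ⟨b, hb⟩ := hsurj (Ltrans L F)
  refine ⟨b, ext fun q ↦ ?_⟩
  obtain ⟨c, rfl⟩ := hsurj q
  rw [dual_def, hsym, hb, ltrans_apply]

lemma ltranstrans_symm (hsym : ∀ b c : B, L c b = L b c)
    (hrefl : Function.Surjective (inclusionInDoubleDual ℝ B))
    (P Q : StrongDual ℝ (StrongDual ℝ B)) : Ltranstrans L Q P = Ltranstrans L P Q := by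
  obtain ⟨b, rfl⟩ := hrefl P
  obtain ⟨c, rfl⟩ := hrefl Q
  simp only [ltranstrans_apply, ltrans_inclusionInDoubleDual hsym, dual_def]
  exact hsym c b

lemma ltranstrans_apply_eq_inclusionInDoubleDual (hsym : ∀ b c : B, L c b = L b c)
    (hrefl : Function.Surjective (inclusionInDoubleDual ℝ B))
    {Lt : StrongDual ℝ B →L[ℝ] StrongDual ℝ (StrongDual ℝ B)}
    (hsymt : ∀ p q : StrongDual ℝ B, Lt q p = Lt p q)
    (hdual : ∀ b : B, Lt (L b) = inclusionInDoubleDual ℝ B b) (c' : StrongDual ℝ B) :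
    Ltranstrans L (Lt c') = inclusionInDoubleDual ℝ (StrongDual ℝ B) c' := by
  ext P
  obtain ⟨b, rfl⟩ := hrefl P
  rw [ltranstrans_apply, ltrans_inclusionInDoubleDual hsym, dual_def, hsymt, hdual]

end

theorem stmt17_general {B : Type*} [NormedAddCommGroup B] [NormedSpace ℝ B]
    (L : B →L[ℝ] StrongDual ℝ B) (hL : ‖L‖ ≤ 1)
    (hsym : ∀ b c : B, L c b = L b c)
    (Lt : StrongDual ℝ B →L[ℝ] StrongDual ℝ (StrongDual ℝ B))
    (hsymt : ∀ p q : StrongDual ℝ B, Lt q p = Lt p q)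
    (hdual : ∀ b : B, Lt (L b) = inclusionInDoubleDual ℝ B b)
    (hsurj : Function.Surjective L) :
    -- `B` is reflexive
    Function.Surjective (inclusionInDoubleDual ℝ B) ∧
    -- `(B**, L^{TT})` is a Banach SNL space ...
    ‖Ltranstrans L‖ ≤ 1 ∧
    (∀ p q : StrongDual ℝ (StrongDual ℝ B), Ltranstrans L q p = Ltranstrans L p q) ∧
    -- ... and is a Banach SNL dual of `(B*, L̃)`
    (∀ c' : StrongDual ℝ B,
      Ltranstrans L (Lt c') = inclusionInDoubleDual ℝ (StrongDual ℝ B) c') := by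
  have hrefl := surjective_inclusionInDoubleDual_of_surjective hsym hsurj
  exact ⟨hrefl, (norm_ltranstrans_le L).trans hL, ltranstrans_symm hsym hrefl,
    ltranstrans_apply_eq_inclusionInDoubleDual hsym hrefl hsymt hdual⟩

theorem stmt17 {B : Type*} [NormedAddCommGroup B] [NormedSpace ℝ B] [CompleteSpace B]
    [Nontrivial B]
    (L : B →L[ℝ] StrongDual ℝ B) (hL : ‖L‖ ≤ 1)
    (hsym : ∀ b c : B, L c b = L b c)
    (Lt : StrongDual ℝ B →L[ℝ] StrongDual ℝ (StrongDual ℝ B)) (hLt : ‖Lt‖ ≤ 1)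
    (hsymt : ∀ p q : StrongDual ℝ B, Lt q p = Lt p q)
    (hdual : ∀ b : B, Lt (L b) = inclusionInDoubleDual ℝ B b)
    (hsurj : Function.Surjective L) :
    -- `B` is reflexive
    Function.Surjective (inclusionInDoubleDual ℝ B) ∧
    -- `(B**, L^{TT})` is a Banach SNL space ...
    ‖Ltranstrans L‖ ≤ 1 ∧
    (∀ p q : StrongDual ℝ (StrongDual ℝ B), Ltranstrans L q p = Ltranstrans L p q) ∧
    -- ... and is a Banach SNL dual of `(B*, L̃)`
    (∀ c' : StrongDual ℝ B,
      Ltranstrans L (Lt c') = inclusionInDoubleDual ℝ (StrongDual ℝ B) c') :=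
  stmt17_general L hL hsym Lt hsymt hdual hsurj
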